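/- arXiv:1907.00925 — 3 statements merged into one kernel-verified Lean document; each statement's English description precedes it below -/
import Mathlib

section
/- Let Ω be an open connected set in ℂⁿ and let (g_j) be a sequence of holomorphic functions on Ω converging uniformly on compact subsets of Ω to a holomorphic function g. If g_j(z) ≠ 0 for all j and all z ∈ Ω, and g is nonconstant, then g(z) ≠ 0 for all z ∈ Ω. -/
open Filter Topology

abbrev Cn (n : ℕ) := EuclideanSpace ℂ (Fin n)

/-- Chordal (spherical) distance between two finite points of the Riemann sphere. -/
noncomputable def chordal (a b : ℂ) : ℝ :=
  dist a b / (Real.sqrt (1 + ‖a‖^2) * Real.sqrt (1 + ‖b‖^2))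

/-- Chordal distance between a finite point and ∞. -/
noncomputable def chordalInf (a : ℂ) : ℝ := 1 / Real.sqrt (1 + ‖a‖^2)

/-- Spherical derivative of a holomorphic function of several complex variables. -/
noncomputable def sphDeriv {E : Type} [NormedAddCommGroup E] [NormedSpace ℂ E]
    (f : E → ℂ) (z : E) : ℝ := ‖fderiv ℂ f z‖ / (1 + ‖f z‖^2)

/-- A family `F` of (holomorphic) functions is normal on `Ω`: every sequence from `F`
has a subsequence which converges uniformly on compact subsets of `Ω` in the spherical
metric, either to a holomorphic function or to ∞. -/
def IsNormalFamily {E : Type} [NormedAddCommGroup E] [NormedSpace ℂ E]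
    (Ω : Set E) (F : Set (E → ℂ)) : Prop :=
  ∀ s : ℕ → E → ℂ, (∀ j, s j ∈ F) →
    ∃ φ : ℕ → ℕ, StrictMono φ ∧
      ((∃ g : E → ℂ, DifferentiableOn ℂ g Ω ∧
          ∀ K, K ⊆ Ω → IsCompact K → ∀ ε > 0, ∃ N, ∀ j ≥ N, ∀ z ∈ K,
            chordal (s (φ j) z) (g z) < ε) ∨
        (∀ K, K ⊆ Ω → IsCompact K → ∀ M : ℝ, ∃ N, ∀ j ≥ N, ∀ z ∈ K, M < ‖s (φ j) z‖))


/-- Auxiliary: if `G` is holomorphic on `Ω ⊇ ball a R` and vanishes near `a`, it vanishes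
on the whole ball, by restriction to complex lines through `a`. -/
private lemma line_vanish {n : ℕ} {Ω : Set (Cn n)} (hΩ : IsOpen Ω) {G : Cn n → ℂ}
    (hG : DifferentiableOn ℂ G Ω) {a : Cn n} {R : ℝ}
    (hball : Metric.ball a R ⊆ Ω) (h0 : G =ᶠ[𝓝 a] (0 : Cn n → ℂ)) :
    ∀ u ∈ Metric.ball a R, G u = 0 := by
  intro u hu
  rcases eq_or_ne u a with rfl | hua
  · exact h0.self_of_nhds
  set v : Cn n := u - a with hv
  have hvpos : 0 < ‖v‖ := by rw [norm_pos_iff]; exact sub_ne_zero.mpr hua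
  have hvR : ‖v‖ < R := by
    have := Metric.mem_ball.mp hu; rwa [dist_eq_norm] at this
  set ρ : ℝ := R / ‖v‖ with hρ
  have hρ1 : 1 < ρ := (one_lt_div hvpos).mpr hvR
  have hρpos : 0 < ρ := by linarith
  set ℓ : ℂ → Cn n := fun t => a + t • v with hℓ
  have hℓdiff : Differentiable ℂ ℓ := (differentiable_const a).add (differentiable_id.smul_const v)
  have hmem : ∀ t : ℂ, ‖t‖ < ρ → ℓ t ∈ Metric.ball a R := by
    intro t ht
    rw [Metric.mem_ball, dist_eq_norm]
    simp only [hℓ, add_sub_cancel_left, norm_smul]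
    exact (lt_div_iff₀ hvpos).mp ht
  set f : ℂ → ℂ := fun t => G (ℓ t) with hf
  have hfdiff : DifferentiableOn ℂ f (Metric.ball (0:ℂ) ρ) := by
    intro t ht
    rw [Metric.mem_ball, dist_eq_norm, sub_zero] at ht
    exact ((hG.differentiableAt (hΩ.mem_nhds (hball (hmem t ht)))).comp t
      (hℓdiff t)).differentiableWithinAt
  have hfan : AnalyticOnNhd ℂ f (Metric.ball (0:ℂ) ρ) :=
    hfdiff.analyticOnNhd Metric.isOpen_ball
  have hℓ0 : ℓ 0 = a := by simp [hℓ]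
  have htend : Filter.Tendsto ℓ (𝓝 (0:ℂ)) (𝓝 a) := by
    rw [← hℓ0]; exact hℓdiff.continuous.tendsto 0
  have hf0 : f =ᶠ[𝓝 (0:ℂ)] (0 : ℂ → ℂ) := h0.comp_tendsto htend
  have heq := hfan.eqOn_zero_of_preconnected_of_eventuallyEq_zero
    (convex_ball (0:ℂ) ρ).isPreconnected (Metric.mem_ball_self hρpos) hf0
  have h1 : (1:ℂ) ∈ Metric.ball (0:ℂ) ρ := by
    rw [Metric.mem_ball, dist_eq_norm, sub_zero]; simpa using hρ1
  have hℓ1 : ℓ 1 = u := by simp [hℓ, hv]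
  simpa [hf, hℓ1] using heq h1

/-- Identity theorem in ℂⁿ: a holomorphic function on an open preconnected set vanishing
near one point vanishes everywhere. -/
private lemma eqOn_zero_of_loc {n : ℕ} {Ω : Set (Cn n)} (hΩ : IsOpen Ω)
    (hconn : IsPreconnected Ω) {G : Cn n → ℂ} (hG : DifferentiableOn ℂ G Ω)
    {z₀ : Cn n} (hz₀ : z₀ ∈ Ω) (h : G =ᶠ[𝓝 z₀] (0 : Cn n → ℂ)) : ∀ z ∈ Ω, G z = 0 := by
  set u : Set (Cn n) := {z | G =ᶠ[𝓝 z] (0 : Cn n → ℂ)} with hu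
  have huo : IsOpen u := by
    rw [isOpen_iff_mem_nhds]
    intro z hz
    filter_upwards [hz.eventually_nhds] with y hy using hy
  have hsub : Ω ⊆ u := by
    apply hconn.subset_of_closure_inter_subset huo ⟨z₀, hz₀, h⟩
    rintro z ⟨hzc, hzΩ⟩
    obtain ⟨R, hRpos, hball⟩ := Metric.isOpen_iff.mp hΩ z hzΩ
    obtain ⟨a, hau, hadist⟩ := Metric.mem_closure_iff.mp hzc (R/3) (by linarith)
    set Ra : ℝ := R - dist a z with hRa
    have hRapos : 0 < Ra := by
      have : dist a z < R/3 := by rwa [dist_comm] at hadist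
      rw [hRa]; linarith
    have hzmem : z ∈ Metric.ball a Ra := by
      rw [Metric.mem_ball, dist_comm]
      have : dist a z < R/3 := by rwa [dist_comm] at hadist
      rw [hRa]; linarith
    have hballa : Metric.ball a Ra ⊆ Ω :=
      (Metric.ball_subset_ball' (by rw [hRa]; linarith)).trans hball
    have hvan := line_vanish hΩ hG hballa hau
    filter_upwards [Metric.isOpen_ball.mem_nhds hzmem] with w hw using hvan w hw
  exact fun z hz => (hsub hz).self_of_nhds

/-- Hurwitz's theorem in ℂⁿ. -/
theorem stmt0 {n : ℕ} {Ω : Set (Cn n)} (hΩ : IsOpen Ω) (hconn : IsConnected Ω)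
    (g : ℕ → Cn n → ℂ) (G : Cn n → ℂ)
    (hg : ∀ j, DifferentiableOn ℂ (g j) Ω) (hG : DifferentiableOn ℂ G Ω)
    (hconv : ∀ K, K ⊆ Ω → IsCompact K → TendstoUniformlyOn g G atTop K)
    (hne : ∀ j, ∀ z ∈ Ω, g j z ≠ 0)
    (hnc : ¬ ∃ c : ℂ, ∀ z ∈ Ω, G z = c) :
    ∀ z ∈ Ω, G z ≠ 0 := by

  intro z₀ hz₀ hG0
  have hGne0 : ¬ (G =ᶠ[𝓝 z₀] (0 : Cn n → ℂ)) := fun h =>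
    hnc ⟨0, eqOn_zero_of_loc hΩ hconn.isPreconnected hG hz₀ h⟩
  obtain ⟨R, hRpos, hball⟩ := Metric.isOpen_iff.mp hΩ z₀ hz₀
  obtain ⟨w, hw1, hw2⟩ : ∃ w, w ∈ Metric.ball z₀ (R/2) ∧ G w ≠ 0 := by
    by_contra hcon
    push_neg at hcon
    apply hGne0
    filter_upwards [Metric.ball_mem_nhds z₀ (by linarith : (0:ℝ) < R/2)] with x hx
    exact hcon x hx
  set v : Cn n := w - z₀ with hv
  have hvpos : 0 < ‖v‖ := by
    rw [norm_pos_iff]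
    intro h0
    rw [hv, sub_eq_zero] at h0
    exact hw2 (h0 ▸ hG0)
  have hvlt : ‖v‖ < R/2 := by
    have := Metric.mem_ball.mp hw1
    rwa [dist_eq_norm] at this
  set ρ : ℝ := R / ‖v‖ with hρ
  have hρ2 : 2 < ρ := by
    rw [hρ, lt_div_iff₀ hvpos]; linarith
  have hρpos : 0 < ρ := by linarith
  set ℓ : ℂ → Cn n := fun t => z₀ + t • v with hℓ
  have hℓdiff : Differentiable ℂ ℓ := by
    exact (differentiable_const z₀).add (differentiable_id.smul_const v)
  have hmem : ∀ t : ℂ, ‖t‖ < ρ → ℓ t ∈ Metric.ball z₀ R := by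
    intro t ht
    rw [Metric.mem_ball, dist_eq_norm]
    simp only [hℓ, add_sub_cancel_left, norm_smul]
    exact (lt_div_iff₀ hvpos).mp ht
  set f : ℂ → ℂ := fun t => G (ℓ t) with hf
  have hfdiffAt : ∀ t : ℂ, ‖t‖ < ρ → DifferentiableAt ℂ f t := fun t ht =>
    (hG.differentiableAt (hΩ.mem_nhds (hball (hmem t ht)))).comp t (hℓdiff t)
  have hfdiff : DifferentiableOn ℂ f (Metric.ball (0:ℂ) ρ) := fun t ht =>
    (hfdiffAt t (by simpa [Metric.mem_ball, dist_eq_norm] using ht)).differentiableWithinAt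
  have hfan : AnalyticOnNhd ℂ f (Metric.ball (0:ℂ) ρ) :=
    hfdiff.analyticOnNhd Metric.isOpen_ball
  have hf0 : f 0 = 0 := by simp [hf, hℓ, hG0]
  have hf1 : f 1 ≠ 0 := by
    have : ℓ 1 = w := by simp [hℓ, hv]
    simpa [hf, this] using hw2
  have hnot : ¬ (f =ᶠ[𝓝 (0:ℂ)] (0 : ℂ → ℂ)) := by
    intro h
    apply hf1
    exact hfan.eqOn_zero_of_preconnected_of_eventuallyEq_zero
      (convex_ball (0:ℂ) ρ).isPreconnected (Metric.mem_ball_self hρpos) h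
      (by rw [Metric.mem_ball, dist_eq_norm]; simpa using by linarith : (1:ℂ) ∈ Metric.ball (0:ℂ) ρ)
  have hev : ∀ᶠ t in 𝓝[≠] (0:ℂ), f t ≠ 0 :=
    (hfan 0 (Metric.mem_ball_self hρpos)).eventually_eq_zero_or_eventually_ne_zero.resolve_left hnot
  rw [eventually_nhdsWithin_iff, Metric.eventually_nhds_iff] at hev
  obtain ⟨δ, hδpos, hδ⟩ := hev
  set r : ℝ := min (δ/2) 1 with hr
  have hrpos : 0 < r := lt_min (by linarith) one_pos
  have hr1 : r ≤ 1 := min_le_right _ _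
  have hrδ : r < δ := lt_of_le_of_lt (min_le_left _ _) (by linarith)
  have hsub : ∀ t : ℂ, t ∈ Metric.closedBall (0:ℂ) r → ‖t‖ < ρ := by
    intro t ht
    rw [Metric.mem_closedBall, dist_eq_norm, sub_zero] at ht
    linarith
  set K : Set (Cn n) := ℓ '' Metric.closedBall (0:ℂ) r with hK
  have hKΩ : K ⊆ Ω := by
    rintro z ⟨t, ht, rfl⟩
    exact hball (hmem t (hsub t ht))
  have hKcpt : IsCompact K := (isCompact_closedBall _ _).image hℓdiff.continuous
  have hsne : (Metric.sphere (0:ℂ) r).Nonempty := NormedSpace.sphere_nonempty.mpr hrpos.le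
  have hfcont : ContinuousOn (fun t => ‖f t‖) (Metric.sphere (0:ℂ) r) := by
    intro t ht
    exact ((hfdiffAt t (hsub t (Metric.sphere_subset_closedBall ht))).continuousAt.continuousWithinAt).norm
  obtain ⟨t₀, ht₀, hmin'⟩ := (isCompact_sphere (0:ℂ) r).exists_isMinOn hsne hfcont
  have hmin : ∀ t ∈ Metric.sphere (0:ℂ) r, ‖f t₀‖ ≤ ‖f t‖ := fun t ht => hmin' ht
  set m : ℝ := ‖f t₀‖ with hm
  have hmpos : 0 < m := by
    rw [hm, norm_pos_iff]
    apply hδ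
    · rw [Metric.mem_sphere] at ht₀; rw [ht₀]; exact hrδ
    · rw [Metric.mem_sphere] at ht₀
      intro h0
      rw [h0, dist_self] at ht₀
      exact hrpos.ne ht₀
  have huconv := hconv K hKΩ hKcpt
  rw [Metric.tendstoUniformlyOn_iff] at huconv
  obtain ⟨N, hN⟩ := (huconv (m/2) (by positivity)).exists
  set h : ℂ → ℂ := fun t => (g N (ℓ t))⁻¹ with hh
  have hhdiff : DifferentiableOn ℂ h (Metric.closedBall (0:ℂ) r) := by
    intro t ht
    have hzΩ : ℓ t ∈ Ω := hball (hmem t (hsub t ht))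
    exact ((((hg N).differentiableAt (hΩ.mem_nhds hzΩ)).comp t (hℓdiff t)).inv
      (hne N _ hzΩ)).differentiableWithinAt
  have hcl : DiffContOnCl ℂ h (Metric.ball (0:ℂ) r) :=
    DifferentiableOn.diffContOnCl (by rwa [closure_ball _ hrpos.ne'])
  have hfr : ∀ t ∈ frontier (Metric.ball (0:ℂ) r), ‖h t‖ ≤ (m/2)⁻¹ := by
    rw [frontier_ball _ hrpos.ne']
    intro t ht
    have htK : ℓ t ∈ K := ⟨t, Metric.sphere_subset_closedBall ht, rfl⟩
    have h1 : dist (G (ℓ t)) (g N (ℓ t)) < m/2 := hN _ htK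
    have h2 : m ≤ ‖G (ℓ t)‖ := hmin t ht
    have h3 : m/2 ≤ ‖g N (ℓ t)‖ := by
      rw [dist_eq_norm] at h1
      have := norm_sub_norm_le (G (ℓ t)) (g N (ℓ t))
      linarith
    rw [hh, norm_inv]
    exact inv_anti₀ (by positivity) h3
  have h0cl : (0:ℂ) ∈ closure (Metric.ball (0:ℂ) r) :=
    subset_closure (Metric.mem_ball_self hrpos)
  have hb := Complex.norm_le_of_forall_mem_frontier_norm_le Metric.isBounded_ball hcl hfr h0cl
  have hℓ0 : ℓ 0 = z₀ := by simp [hℓ]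
  have hgN0 : g N z₀ ≠ 0 := hne N z₀ hz₀
  have hb' : (m/2) ≤ ‖g N z₀‖ := by
    rw [hh, norm_inv, hℓ0] at hb
    have hpos : 0 < ‖g N z₀‖ := norm_pos_iff.mpr hgN0
    by_contra hcon
    push_neg at hcon
    have := inv_strictAnti₀ hpos hcon
    linarith
  have h0K : z₀ ∈ K := ⟨0, Metric.mem_closedBall_self hrpos.le, hℓ0⟩
  have hlt : ‖g N z₀‖ < m/2 := by
    have := hN z₀ h0K
    rwa [hG0, dist_eq_norm, zero_sub, norm_neg] at this
  linarith
end

section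
/- Let f and g be holomorphic functions on an open set Ω ⊆ ℂⁿ with g^{2^m} = f for some positive integer m, where f omits the value 0. Then for all z ∈ Ω, g^♯(z) ≥ (1/2^m)·f^♯(z), where h^♯(z) = max_{|v|=1} |⟨Dh(z), v̄⟩| / (1 + |h(z)|²) is the spherical derivative. -/
open Filter Topology

/-! Near `z` we have `f = g ^ k` with `k = 2 ^ m`, so the chain rule gives
`‖Df‖ = k ‖g‖ ^ (k - 1) ‖Dg‖`, and the claim reduces to the elementary inequality
`a ^ (k - 1) (1 + a ^ 2) ≤ 1 + a ^ (2 k)` for `a = ‖g z‖ ≥ 0`, which is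
`(a ^ (k - 1) - 1) (a ^ (k + 1) - 1) ≥ 0`: both powers lie on the same side of `1`. -/

theorem pow_mul_one_add_sq_le_one_add_sq_pow_succ {a : ℝ} (ha : 0 ≤ a) (k : ℕ) :
    a ^ k * (1 + a ^ 2) ≤ 1 + (a ^ (k + 1)) ^ 2 := by
  have same_sign : 0 ≤ (a ^ k - 1) * (a ^ (k + 2) - 1) := by
    rcases le_total a 1 with h | h
    · exact mul_nonneg_of_nonpos_of_nonpos (by linarith [pow_le_one₀ ha h (n := k)])
        (by linarith [pow_le_one₀ ha h (n := k + 2)])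
    · exact mul_nonneg (by linarith [one_le_pow₀ h (n := k)])
        (by linarith [one_le_pow₀ h (n := k + 2)])
  calc a ^ k * (1 + a ^ 2) = a ^ k + a ^ (k + 2) := by ring
    _ ≤ 1 + a ^ k * a ^ (k + 2) := by linarith
    _ = 1 + (a ^ (k + 1)) ^ 2 := by ring

section SphDeriv

variable {E : Type} [NormedAddCommGroup E] [NormedSpace ℂ E]

theorem Filter.EventuallyEq.sphDeriv_eq {f g : E → ℂ} {z : E} (h : f =ᶠ[𝓝 z] g) :
    sphDeriv f z = sphDeriv g z := by
  rw [sphDeriv, sphDeriv, h.fderiv_eq, h.eq_of_nhds]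

theorem sphDeriv_pow_le {g : E → ℂ} {z : E} (hg : DifferentiableAt ℂ g z) (k : ℕ) :
    sphDeriv (fun w => g w ^ k) z ≤ k * sphDeriv g z := by
  rcases k with _ | j
  · simp [sphDeriv]
  have hnorm : ‖fderiv ℂ (fun w => g w ^ (j + 1)) z‖ =
      (j + 1) * ‖g z‖ ^ j * ‖fderiv ℂ g z‖ := by
    rw [fderiv_fun_pow _ hg, norm_smul, nsmul_eq_mul, norm_mul, Complex.norm_natCast, norm_pow,
      Nat.add_sub_cancel]
    push_cast
    ring
  have key := pow_mul_one_add_sq_le_one_add_sq_pow_succ (norm_nonneg (g z)) j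
  rw [sphDeriv, sphDeriv, hnorm, norm_pow, Nat.cast_succ, ← mul_div_assoc,
    div_le_div_iff₀ (by positivity) (by positivity)]
  calc _ = ((j + 1) * ‖fderiv ℂ g z‖) * (‖g z‖ ^ j * (1 + ‖g z‖ ^ 2)) := by ring
    _ ≤ _ := mul_le_mul_of_nonneg_left key (by positivity)

end SphDeriv

theorem stmt4_general {n : ℕ} {Ω : Set (Cn n)} (hΩ : IsOpen Ω)
    (f g : Cn n → ℂ) (hg : DifferentiableOn ℂ g Ω)
    (m : ℕ) (hpow : ∀ z ∈ Ω, g z ^ (2 ^ m) = f z) :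
    ∀ z ∈ Ω, (1 / 2 ^ m : ℝ) * sphDeriv f z ≤ sphDeriv g z := by
  intro z hz
  have hf : f =ᶠ[𝓝 z] fun w => g w ^ 2 ^ m :=
    eventually_of_mem (hΩ.mem_nhds hz) fun w hw => (hpow w hw).symm
  have hpow_le := sphDeriv_pow_le (hg.differentiableAt (hΩ.mem_nhds hz)) (2 ^ m)
  rw [hf.sphDeriv_eq, one_div_mul_eq_div, div_le_iff₀' (by positivity)]
  exact_mod_cast hpow_le

/-- Spherical derivative estimate for 2^m-th roots. -/
theorem stmt4 {n : ℕ} {Ω : Set (Cn n)} (hΩ : IsOpen Ω)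
    (f g : Cn n → ℂ) (hf : DifferentiableOn ℂ f Ω) (hg : DifferentiableOn ℂ g Ω)
    (m : ℕ) (hm : 0 < m) (hpow : ∀ z ∈ Ω, g z ^ (2 ^ m) = f z)
    (h0 : ∀ z ∈ Ω, f z ≠ 0) :
    ∀ z ∈ Ω, (1 / 2 ^ m : ℝ) * sphDeriv f z ≤ sphDeriv g z :=
  stmt4_general hΩ f g hg m hpow
end

section
/- Let 𝓕 be a family of holomorphic functions omitting 0 and 1 on a domain Ω ⊆ ℂⁿ, and let 𝓖 = {(f − a)/(f − b) : f ∈ 𝓕} where a, b : Ω → ℂ are holomorphic with a(z) ≠ b(z) on Ω and each f ∈ 𝓕 omits a(z) and b(z) pointwise. If 𝓖 is a normal family on Ω, then 𝓕 is a normal family on Ω. -/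
open Filter Topology

open Set Metric

/-! Write `t j = (f j - a) / (f j - b)` for a sequence `f` in `F`, so that
`f j = (b * t j - a) / (t j - 1)` with `t j ≠ 1` on `Ω`. Along a subsequence either `t j → ∞`,
and then `f j → b`, or `t j → h` locally uniformly with `h` holomorphic. By Hurwitz's theorem for
the zero-free functions `t j - 1`, either `h ≠ 1` everywhere and `f j → (b * h - a) / (h - 1)`, or
`h ≡ 1` on the connected set `Ω` and `f j → ∞`. -/

lemma chordal_nonneg (x y : ℂ) : 0 ≤ chordal x y := by
  unfold chordal
  positivity

lemma chordal_le_dist (x y : ℂ) : chordal x y ≤ dist x y :=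
  div_le_self dist_nonneg <|
    one_le_mul_of_one_le_of_one_le (Real.one_le_sqrt.2 (by simp)) (Real.one_le_sqrt.2 (by simp))

lemma dist_le_of_chordal_le {x y : ℂ} {c M : ℝ} (hy : ‖y‖ ≤ M) (hc : c * (1 + M) ≤ 1 / 2)
    (h : chordal x y ≤ c) : dist x y ≤ 2 * c * (1 + M) ^ 2 := by
  have sqrt_le (r : ℝ) (hr : 0 ≤ r) : √(1 + r ^ 2) ≤ 1 + r :=
    Real.sqrt_le_iff.2 ⟨by linarith, by nlinarith⟩
  have hx := sqrt_le ‖x‖ (norm_nonneg x)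
  have hy' := (sqrt_le ‖y‖ (norm_nonneg y)).trans (by linarith : 1 + ‖y‖ ≤ 1 + M)
  have hM : 0 ≤ M := (norm_nonneg y).trans hy
  have hc0 : 0 ≤ c := (chordal_nonneg x y).trans h
  have hdist : dist x y = chordal x y * (√(1 + ‖x‖ ^ 2) * √(1 + ‖y‖ ^ 2)) := by
    unfold chordal
    rw [div_mul_cancel₀]
    positivity
  have hxy : ‖x‖ ≤ M + dist x y := by
    rw [dist_eq_norm]
    linarith [norm_le_norm_add_norm_sub' x y, norm_sub_rev x y]
  -- The term `c * (1 + M) * dist x y` on the right is at most `dist x y / 2` and is absorbed.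
  have : dist x y ≤ c * ((1 + (M + dist x y)) * (1 + M)) := calc
    _ = _ := hdist
    _ ≤ _ := mul_le_mul h (mul_le_mul (hx.trans (by linarith)) hy' (Real.sqrt_nonneg _)
      (by linarith [dist_nonneg (x := x) (y := y)])) (by positivity) hc0
  nlinarith [mul_le_mul_of_nonneg_right hc (dist_nonneg (x := x) (y := y))]

section Convergence

variable {X : Type*} [TopologicalSpace X] {Ω : Set X} {s : ℕ → X → ℂ} {g : X → ℂ}

-- The two alternatives in `IsNormalFamily`, which unfolds to them definitionally.
def TendstoChordallyOn (s : ℕ → X → ℂ) (g : X → ℂ) (Ω : Set X) : Prop :=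
  ∀ K, K ⊆ Ω → IsCompact K → ∀ ε > 0, ∃ N, ∀ j ≥ N, ∀ z ∈ K, chordal (s j z) (g z) < ε

def TendstoInftyOn (s : ℕ → X → ℂ) (Ω : Set X) : Prop :=
  ∀ K, K ⊆ Ω → IsCompact K → ∀ M : ℝ, ∃ N, ∀ j ≥ N, ∀ z ∈ K, M < ‖s j z‖

lemma tendstoLocallyUniformlyOn_const {β : Type*} [UniformSpace β] (g : X → β) :
    TendstoLocallyUniformlyOn (fun _ : ℕ => g) g atTop Ω :=
  fun _ hu _ _ => ⟨univ, univ_mem, Eventually.of_forall fun _ _ _ => refl_mem_uniformity hu⟩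

variable [LocallyCompactSpace X]

lemma tendstoLocallyUniformlyOn_atTop_iff_forall_isCompact (hΩ : IsOpen Ω) :
    TendstoLocallyUniformlyOn s g atTop Ω ↔
      ∀ K, K ⊆ Ω → IsCompact K → ∀ ε > 0, ∃ N, ∀ j ≥ N, ∀ z ∈ K, dist (g z) (s j z) < ε := by
  simp only [tendstoLocallyUniformlyOn_iff_forall_isCompact hΩ, Metric.tendstoUniformlyOn_iff,
    eventually_atTop]

lemma TendstoLocallyUniformlyOn.tendstoChordallyOn (hΩ : IsOpen Ω)
    (h : TendstoLocallyUniformlyOn s g atTop Ω) : TendstoChordallyOn s g Ω := by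
  intro K hK hKc ε hε
  obtain ⟨N, hN⟩ := (tendstoLocallyUniformlyOn_atTop_iff_forall_isCompact hΩ).1 h K hK hKc ε hε
  exact ⟨N, fun j hj z hz => (chordal_le_dist _ _).trans_lt (dist_comm (g z) _ ▸ hN j hj z hz)⟩

lemma TendstoChordallyOn.tendstoLocallyUniformlyOn (hΩ : IsOpen Ω) (hg : ContinuousOn g Ω)
    (h : TendstoChordallyOn s g Ω) : TendstoLocallyUniformlyOn s g atTop Ω := by
  refine (tendstoLocallyUniformlyOn_atTop_iff_forall_isCompact hΩ).2 fun K hK hKc ε hε => ?_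
  obtain ⟨M₀, hM₀⟩ := hKc.exists_bound_of_continuousOn (hg.mono hK)
  set M := max M₀ 0
  have hM : 0 < 1 + M := by positivity
  set c := min (1 / (2 * (1 + M))) (ε / (4 * (1 + M) ^ 2))
  have hc : c * (1 + M) ≤ 1 / 2 :=
    (mul_le_mul_of_nonneg_right (min_le_left _ _) hM.le).trans_eq (by field_simp)
  have hcε : 2 * c * (1 + M) ^ 2 ≤ ε / 2 := calc
    2 * c * (1 + M) ^ 2 ≤ 2 * (ε / (4 * (1 + M) ^ 2)) * (1 + M) ^ 2 := by
      gcongr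
      exact min_le_right _ _
    _ = ε / 2 := by field_simp; ring
  obtain ⟨N, hN⟩ := h K hK hKc c (lt_min (by positivity) (by positivity))
  refine ⟨N, fun j hj z hz => ?_⟩
  rw [dist_comm]
  calc dist (s j z) (g z) ≤ 2 * c * (1 + M) ^ 2 :=
        dist_le_of_chordal_le ((hM₀ z hz).trans (le_max_left _ _)) hc (hN j hj z hz).le
    _ < ε := by linarith

lemma TendstoInftyOn.tendstoLocallyUniformlyOn_inv (hΩ : IsOpen Ω) (h : TendstoInftyOn s Ω) :
    TendstoLocallyUniformlyOn (fun j z => (s j z)⁻¹) (fun _ => 0) atTop Ω := by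
  refine (tendstoLocallyUniformlyOn_atTop_iff_forall_isCompact hΩ).2 fun K hK hKc ε hε => ?_
  obtain ⟨N, hN⟩ := h K hK hKc ε⁻¹
  refine ⟨N, fun j hj z hz => ?_⟩
  rw [dist_zero_left, norm_inv]
  exact inv_lt_of_inv_lt₀ hε (hN j hj z hz)

lemma tendstoInftyOn_of_tendstoLocallyUniformlyOn_inv_sub (hΩ : IsOpen Ω) {b : X → ℂ}
    (hb : ContinuousOn b Ω) (hsb : ∀ j, ∀ z ∈ Ω, s j z ≠ b z)
    (h : TendstoLocallyUniformlyOn (fun j z => (s j z - b z)⁻¹) 0 atTop Ω) :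
    TendstoInftyOn s Ω := by
  intro K hK hKc M
  obtain ⟨B₀, hB₀⟩ := hKc.exists_bound_of_continuousOn (hb.mono hK)
  set R := max M 0 + max B₀ 0 + 1
  obtain ⟨N, hN⟩ := (tendstoLocallyUniformlyOn_atTop_iff_forall_isCompact hΩ).1 h K hK hKc R⁻¹
    (by positivity)
  refine ⟨N, fun j hj z hz => ?_⟩
  have hsub : R < ‖s j z - b z‖ := by
    have := hN j hj z hz
    rw [Pi.zero_apply, dist_zero_left, norm_inv] at this
    exact (inv_lt_inv₀ (norm_pos_iff.2 (sub_ne_zero.2 (hsb j z (hK hz)))) (by positivity)).1 this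
  linarith [norm_sub_le (s j z) (b z), hB₀ z hz, le_max_left M 0, le_max_left B₀ 0]

end Convergence

lemma IsPreconnected.eqOn_const_of_eventually_eq {X Y : Type*} [TopologicalSpace X]
    [TopologicalSpace Y] [T1Space Y] {Ω : Set X} (hconn : IsPreconnected Ω) (hΩ : IsOpen Ω)
    {H : X → Y} (hH : ContinuousOn H Ω) {c : Y} (hloc : ∀ z ∈ Ω, H z = c → ∀ᶠ w in 𝓝 z, H w = c)
    {z₀ : X} (hz₀ : z₀ ∈ Ω) (hHz₀ : H z₀ = c) : EqOn H (fun _ => c) Ω := by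
  have hsub : Ω ⊆ {z | ∀ᶠ w in 𝓝 z, H w = c} :=
    hconn.subset_left_of_subset_union isOpen_setOfPred_eventually_nhds
      (hH.isOpen_inter_preimage hΩ isOpen_compl_singleton)
      (disjoint_left.2 fun _ hz hz' => hz'.2 hz.self_of_nhds)
      (fun z hz => (em (H z = c)).imp (hloc z hz) fun h => ⟨hz, h⟩)
      ⟨z₀, hz₀, hloc z₀ hz₀ hHz₀⟩
  exact fun z hz => (hsub hz).self_of_nhds

lemma le_norm_of_forall_mem_frontier_le_norm {E : Type*} [NormedAddCommGroup E]
    [NormedSpace ℂ E] [Nontrivial E] {f : E → ℂ} {U : Set E} (hU : Bornology.IsBounded U)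
    (hf : DiffContOnCl ℂ f U) (hf₀ : ∀ z ∈ closure U, f z ≠ 0) {m : ℝ} (hm : 0 < m)
    (hfr : ∀ z ∈ frontier U, m ≤ ‖f z‖) {z : E} (hz : z ∈ closure U) : m ≤ ‖f z‖ := by
  have := Complex.norm_le_of_forall_mem_frontier_norm_le hU (hf.inv hf₀) (C := m⁻¹)
    (fun w hw => by rw [Pi.inv_apply, norm_inv]; exact inv_anti₀ hm (hfr w hw)) hz
  rw [Pi.inv_apply, norm_inv] at this
  exact (inv_le_inv₀ (norm_pos_iff.2 (hf₀ z hz)) hm).1 this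

lemma Complex.hurwitz_eventually_eq_zero {U : Set ℂ} (hU : IsOpen U) {u : ℕ → ℂ → ℂ} {H : ℂ → ℂ}
    (hu : ∀ j, DifferentiableOn ℂ (u j) U) (hu₀ : ∀ j, ∀ z ∈ U, u j z ≠ 0)
    (hlim : TendstoLocallyUniformlyOn u H atTop U) {z₀ : ℂ} (hz₀ : z₀ ∈ U) (hH : H z₀ = 0) :
    ∀ᶠ z in 𝓝 z₀, H z = 0 := by
  have hHd : DifferentiableOn ℂ H U := hlim.differentiableOn (Eventually.of_forall hu) hU
  refine ((hHd.analyticAt (hU.mem_nhds hz₀)).eventually_eq_zero_or_eventually_ne_zero).resolve_right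
    fun hne => ?_
  obtain ⟨ε, hε, hball⟩ : ∃ ε > 0, ∀ z ∈ ball z₀ ε, z ∈ U ∧ (z ≠ z₀ → H z ≠ 0) :=
    Metric.eventually_nhds_iff_ball.1 <|
      (hU.eventually_mem hz₀).and (eventually_nhdsWithin_iff.1 hne)
  have hρ : 0 < ε / 2 := half_pos hε
  have hclosedBall : closedBall z₀ (ε / 2) ⊆ U := fun z hz =>
    (hball z (closedBall_subset_ball (half_lt_self hε) hz)).1
  have hsphere : ∀ z ∈ sphere z₀ (ε / 2), H z ≠ 0 := fun z hz =>
    (hball z (closedBall_subset_ball (half_lt_self hε) (sphere_subset_closedBall hz))).2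
      (ne_of_mem_sphere hz hρ.ne')
  obtain ⟨w, hw, hmin⟩ := (isCompact_sphere z₀ (ε / 2)).exists_isMinOn
    (NormedSpace.sphere_nonempty.2 hρ.le)
    (hHd.continuousOn.mono (sphere_subset_closedBall.trans hclosedBall)).norm
  have hm : 0 < ‖H w‖ := norm_pos_iff.2 (hsphere w hw)
  obtain ⟨N, hN⟩ := (tendstoLocallyUniformlyOn_atTop_iff_forall_isCompact hU).1 hlim _
    hclosedBall (isCompact_closedBall z₀ (ε / 2)) (‖H w‖ / 2) (half_pos hm)
  -- Minimum modulus: `u N` is zero-free and `‖H w‖ / 2`-close to `H`, so `‖u N z₀‖ ≥ ‖H w‖ / 2`.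
  have hlarge : ‖H w‖ / 2 ≤ ‖u N z₀‖ := by
    refine le_norm_of_forall_mem_frontier_le_norm (isBounded_ball (x := z₀) (r := ε / 2)) ?_ ?_
      (half_pos hm) ?_ ?_
    · exact ((hu N).mono (closure_ball z₀ hρ.ne' ▸ hclosedBall)).diffContOnCl
    · exact fun z hz => hu₀ N z (hclosedBall (closure_ball z₀ hρ.ne' ▸ hz))
    · rw [frontier_ball z₀ hρ.ne']
      intro z hz
      have := hN N le_rfl z (sphere_subset_closedBall hz)
      have hHz : ‖H w‖ ≤ ‖H z‖ := hmin hz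
      rw [dist_eq_norm] at this
      linarith [norm_sub_norm_le (H z) (u N z)]
    · exact subset_closure (mem_ball_self hρ)
  have hsmall := hN N le_rfl z₀ (mem_closedBall_self hρ.le)
  rw [hH, dist_zero_left] at hsmall
  linarith

section Hurwitz

variable {E : Type*} [NormedAddCommGroup E] [NormedSpace ℂ E] {Ω : Set E} {u : ℕ → E → ℂ}
  {H : E → ℂ} {z₀ : E}

lemma hurwitz_eventually_eq_zero (hΩ : IsOpen Ω) (hu : ∀ j, DifferentiableOn ℂ (u j) Ω)
    (hu₀ : ∀ j, ∀ z ∈ Ω, u j z ≠ 0) (hlim : TendstoLocallyUniformlyOn u H atTop Ω)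
    (hz₀ : z₀ ∈ Ω) (hH : H z₀ = 0) :
    ∀ᶠ z in 𝓝 z₀, H z = 0 := by
  obtain ⟨r, hr, hrΩ⟩ := Metric.isOpen_iff.1 hΩ z₀ hz₀
  filter_upwards [ball_mem_nhds z₀ (half_pos hr)] with w hw
  -- Zeros are not isolated in several variables: restrict to the complex line through `z₀`, `w`.
  set L := AffineMap.lineMap (k := ℂ) z₀ w
  have hLc : Continuous L := AffineMap.lineMap_continuous
  have hmaps : MapsTo L (ball 0 2) Ω := fun τ hτ => hrΩ <| by
    rw [mem_ball, dist_lineMap_left, ← dist_zero_right τ, dist_comm z₀ w]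
    rw [mem_ball] at hτ hw
    nlinarith [dist_nonneg (x := w) (y := z₀)]
  have hlimL := hlim.comp L hmaps hLc.continuousOn
  have hHL : EqOn (H ∘ L) (fun _ => 0) (ball 0 2) :=
    (convex_ball (0 : ℂ) 2).isPreconnected.eqOn_const_of_eventually_eq isOpen_ball
      (hlimL.continuousOn (Frequently.of_forall fun j =>
        ((hu j).comp L.differentiableOn hmaps).continuousOn))
      (fun τ hτ hHτ => Complex.hurwitz_eventually_eq_zero isOpen_ball
        (fun j => (hu j).comp L.differentiableOn hmaps) (fun j τ hτ => hu₀ j (L τ) (hmaps hτ))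
        hlimL hτ hHτ)
      (mem_ball_self two_pos) (by simpa [L] using hH)
  simpa [L] using hHL (show (1 : ℂ) ∈ ball 0 2 by simp)

theorem hurwitz_eqOn_zero (hΩ : IsOpen Ω) (hconn : IsPreconnected Ω)
    (hu : ∀ j, DifferentiableOn ℂ (u j) Ω) (hu₀ : ∀ j, ∀ z ∈ Ω, u j z ≠ 0)
    (hlim : TendstoLocallyUniformlyOn u H atTop Ω) (hz₀ : z₀ ∈ Ω) (hH : H z₀ = 0) :
    EqOn H 0 Ω :=
  hconn.eqOn_const_of_eventually_eq hΩ
    (hlim.continuousOn (Frequently.of_forall fun j => (hu j).continuousOn))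
    (fun _ hz hHz => hurwitz_eventually_eq_zero hΩ hu hu₀ hlim hz hHz) hz₀ hH

end Hurwitz

section Moebius

variable {X : Type*} {Ω : Set X} {a b : X → ℂ} {s : ℕ → X → ℂ}

noncomputable def moebius (a b f : X → ℂ) : X → ℂ := fun z => (f z - a z) / (f z - b z)

lemma moebius_ne_one (hab : ∀ z ∈ Ω, a z ≠ b z) {f : X → ℂ} (hfb : ∀ z ∈ Ω, f z ≠ b z) :
    ∀ z ∈ Ω, moebius a b f z ≠ 1 := fun z hz h1 =>
  hab z hz <| by
    rw [moebius, div_eq_one_iff_eq (sub_ne_zero.2 (hfb z hz))] at h1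
    linear_combination -h1

variable [TopologicalSpace X]

lemma tendstoLocallyUniformlyOn_of_moebius (ha : ContinuousOn a Ω) (hb : ContinuousOn b Ω)
    (hab : ∀ z ∈ Ω, a z ≠ b z) (hsb : ∀ j, ∀ z ∈ Ω, s j z ≠ b z) {h : X → ℂ}
    (hh : ContinuousOn h Ω) (hh1 : ∀ z ∈ Ω, h z ≠ 1)
    (hlim : TendstoLocallyUniformlyOn (fun j => moebius a b (s j)) h atTop Ω) :
    TendstoLocallyUniformlyOn s (fun z => (b z * h z - a z) / (h z - 1)) atTop Ω := by
  refine ((((tendstoLocallyUniformlyOn_const b).fun_mul₀ hlim hb hh).fun_sub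
    (tendstoLocallyUniformlyOn_const a)).fun_div₀
    (hlim.fun_sub (tendstoLocallyUniformlyOn_const fun _ => 1)) ((hb.mul hh).sub ha)
    (hh.sub continuousOn_const) fun z hz => sub_ne_zero.2 (hh1 z hz)).congr
    fun j z hz => ?_
  -- `s j = (b * t j - a) / (t j - 1)` for `t j = moebius a b (s j)`
  have hsb' := sub_ne_zero.2 (hsb j z hz)
  rw [div_eq_iff (sub_ne_zero.2 (moebius_ne_one hab (hsb j) z hz)), moebius]
  field_simp
  ring

lemma tendstoInftyOn_of_moebius_tendsto_one [LocallyCompactSpace X] (hΩ : IsOpen Ω)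
    (ha : ContinuousOn a Ω) (hb : ContinuousOn b Ω) (hab : ∀ z ∈ Ω, a z ≠ b z)
    (hsb : ∀ j, ∀ z ∈ Ω, s j z ≠ b z)
    (hlim : TendstoLocallyUniformlyOn (fun j => moebius a b (s j)) (fun _ => 1) atTop Ω) :
    TendstoInftyOn s Ω := by
  refine tendstoInftyOn_of_tendstoLocallyUniformlyOn_inv_sub hΩ hb hsb ?_
  refine (((hlim.fun_sub (tendstoLocallyUniformlyOn_const fun _ => 1)).fun_div₀
    (tendstoLocallyUniformlyOn_const fun z => b z - a z) continuousOn_const (hb.sub ha)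
    fun z hz => sub_ne_zero.2 (hab z hz).symm).congr fun j z hz => ?_).congr_right
    fun z _ => by simp
  -- `(s j - b)⁻¹ = (t j - 1) / (b - a)` for `t j = moebius a b (s j)`
  have hsb' := sub_ne_zero.2 (hsb j z hz)
  have hba := sub_ne_zero.2 (hab z hz).symm
  simp only [moebius]
  field_simp
  ring

lemma tendstoLocallyUniformlyOn_of_moebius_tendstoInftyOn [LocallyCompactSpace X]
    (hΩ : IsOpen Ω) (ha : ContinuousOn a Ω) (hb : ContinuousOn b Ω) (hab : ∀ z ∈ Ω, a z ≠ b z)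
    (hsa : ∀ j, ∀ z ∈ Ω, s j z ≠ a z) (hsb : ∀ j, ∀ z ∈ Ω, s j z ≠ b z)
    (hlim : TendstoInftyOn (fun j => moebius a b (s j)) Ω) :
    TendstoLocallyUniformlyOn s b atTop Ω := by
  have hinv := hlim.tendstoLocallyUniformlyOn_inv hΩ
  refine (((((tendstoLocallyUniformlyOn_const a).fun_mul₀ hinv ha continuousOn_const).fun_sub
    (tendstoLocallyUniformlyOn_const b)).fun_div₀
    (hinv.fun_sub (tendstoLocallyUniformlyOn_const fun _ => 1)) ((ha.mul continuousOn_const).sub hb)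
    continuousOn_const (by simp)).congr
    fun j z hz => ?_).congr_right fun z _ => by simp
  -- `s j = (a * (t j)⁻¹ - b) / ((t j)⁻¹ - 1)` for `t j = moebius a b (s j)`
  have hsa' := sub_ne_zero.2 (hsa j z hz)
  have hsb' := sub_ne_zero.2 (hsb j z hz)
  have hab' := sub_ne_zero.2 (hab z hz)
  simp only [moebius, inv_div]
  rw [div_eq_iff (by rw [div_sub_one hsa', sub_sub_sub_cancel_left]; exact div_ne_zero hab' hsa')]
  field_simp
  ring

end Moebius

section Holomorphic

variable {E : Type*} [NormedAddCommGroup E] [NormedSpace ℂ E] {Ω : Set E} {a b : E → ℂ}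

lemma differentiableOn_fun_div {f g : E → ℂ} (hf : DifferentiableOn ℂ f Ω)
    (hg : DifferentiableOn ℂ g Ω) (hg₀ : ∀ z ∈ Ω, g z ≠ 0) :
    DifferentiableOn ℂ (fun z => f z / g z) Ω := by
  simpa only [div_eq_mul_inv] using hf.fun_mul (hg.fun_inv hg₀)

lemma differentiableOn_moebius {f : E → ℂ} (ha : DifferentiableOn ℂ a Ω)
    (hb : DifferentiableOn ℂ b Ω) (hf : DifferentiableOn ℂ f Ω) (hfb : ∀ z ∈ Ω, f z ≠ b z) :
    DifferentiableOn ℂ (moebius a b f) Ω :=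
  differentiableOn_fun_div (hf.sub ha) (hf.sub hb) fun z hz => sub_ne_zero.2 (hfb z hz)

lemma eqOn_one_or_forall_ne_one_of_moebius_tendsto (hΩ : IsOpen Ω) (hconn : IsPreconnected Ω)
    (ha : DifferentiableOn ℂ a Ω) (hb : DifferentiableOn ℂ b Ω) (hab : ∀ z ∈ Ω, a z ≠ b z)
    {s : ℕ → E → ℂ} (hs : ∀ j, DifferentiableOn ℂ (s j) Ω) (hsb : ∀ j, ∀ z ∈ Ω, s j z ≠ b z)
    {h : E → ℂ} (hlim : TendstoLocallyUniformlyOn (fun j => moebius a b (s j)) h atTop Ω) :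
    EqOn h 1 Ω ∨ ∀ z ∈ Ω, h z ≠ 1 := by
  refine or_iff_not_imp_right.2 fun h1 => ?_
  push Not at h1
  obtain ⟨z₀, hz₀, hz₀1⟩ := h1
  have := hurwitz_eqOn_zero hΩ hconn
    (fun j => (differentiableOn_moebius ha hb (hs j) (hsb j)).sub_const 1)
    (fun j z hz => sub_ne_zero.2 (moebius_ne_one hab (hsb j) z hz))
    (hlim.fun_sub (tendstoLocallyUniformlyOn_const fun _ => 1)) hz₀ (sub_eq_zero.2 hz₀1)
  exact fun z hz => sub_eq_zero.1 (this hz)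

end Holomorphic

theorem stmt10_general {n : ℕ} {Ω : Set (Cn n)} (hΩ : IsOpen Ω) (hconn : IsConnected Ω)
    (F : Set (Cn n → ℂ)) (hhol : ∀ f ∈ F, DifferentiableOn ℂ f Ω)
    (a b : Cn n → ℂ) (ha : DifferentiableOn ℂ a Ω) (hb : DifferentiableOn ℂ b Ω)
    (hab : ∀ z ∈ Ω, a z ≠ b z)
    (hom : ∀ f ∈ F, ∀ z ∈ Ω, f z ≠ a z ∧ f z ≠ b z)
    (hG : IsNormalFamily Ω ((fun f => fun z => (f z - a z) / (f z - b z)) '' F)) :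
    IsNormalFamily Ω F := by
  intro s hs
  have hsa : ∀ j, ∀ z ∈ Ω, s j z ≠ a z := fun j z hz => (hom _ (hs j) z hz).1
  have hsb : ∀ j, ∀ z ∈ Ω, s j z ≠ b z := fun j z hz => (hom _ (hs j) z hz).2
  obtain ⟨φ, hφ, hlim⟩ := hG (fun j => moebius a b (s j)) fun j => ⟨s j, hs j, rfl⟩
  refine ⟨φ, hφ, ?_⟩
  rcases hlim with ⟨h, hh, hconv⟩ | hinf
  · have hT := TendstoChordallyOn.tendstoLocallyUniformlyOn hΩ hh.continuousOn hconv
    rcases eqOn_one_or_forall_ne_one_of_moebius_tendsto hΩ hconn.isPreconnected ha hb hab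
      (fun j => hhol _ (hs (φ j))) (fun j => hsb (φ j)) hT with h1 | h1
    · right
      exact tendstoInftyOn_of_moebius_tendsto_one hΩ ha.continuousOn hb.continuousOn hab
        (fun j => hsb (φ j)) (hT.congr_right h1)
    · left
      exact ⟨_, differentiableOn_fun_div ((hb.mul hh).sub ha) (hh.sub_const 1)
        fun z hz => sub_ne_zero.2 (h1 z hz),
        (tendstoLocallyUniformlyOn_of_moebius ha.continuousOn hb.continuousOn hab
          (fun j => hsb (φ j)) hh.continuousOn h1 hT).tendstoChordallyOn hΩ⟩
  · left
    exact ⟨b, hb, (tendstoLocallyUniformlyOn_of_moebius_tendstoInftyOn hΩ ha.continuousOn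
      hb.continuousOn hab (fun j => hsa (φ j)) (fun j => hsb (φ j)) hinf).tendstoChordallyOn hΩ⟩

/-- Normality of the Möbius-transformed family implies normality of the original family. -/
theorem stmt10 {n : ℕ} {Ω : Set (Cn n)} (hΩ : IsOpen Ω) (hconn : IsConnected Ω)
    (F : Set (Cn n → ℂ)) (hhol : ∀ f ∈ F, DifferentiableOn ℂ f Ω)
    (h01 : ∀ f ∈ F, ∀ z ∈ Ω, f z ≠ 0 ∧ f z ≠ 1)
    (a b : Cn n → ℂ) (ha : DifferentiableOn ℂ a Ω) (hb : DifferentiableOn ℂ b Ω)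
    (hab : ∀ z ∈ Ω, a z ≠ b z)
    (hom : ∀ f ∈ F, ∀ z ∈ Ω, f z ≠ a z ∧ f z ≠ b z)
    (hG : IsNormalFamily Ω ((fun f => fun z => (f z - a z) / (f z - b z)) '' F)) :
    IsNormalFamily Ω F :=
  stmt10_general hΩ hconn F hhol a b ha hb hab hom hG
end
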